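/- For every 2-user broadcast channel N on finite alphabets and every fully NS-assisted (tripartite) coding scheme Z with message sets {1,...,M1}, {1,...,M2}, the induced joint distribution p(w2,x,y1) = (1/(M1·M2)) Σ_{w1,y2} Z_T(x|w1,w2) N(y1,y2|x) satisfies I(X;Y1|W2) ≥ η₁(Z)·log₂ M1 − H_b(η₁(Z)), where Z_T(x|w1,w2) = Σ_{ŵ1,ŵ2} Z(x,ŵ1,ŵ2|(w1,w2),y1,y2) is the transmitter marginal (independent of (y1,y2) by the non-signaling property). -/

import Mathlib

open scoped BigOperators Classical
open Finset Filter

noncomputable section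

/-- A probability mass function on a finite alphabet. -/
def IsPMF {A : Type*} [Fintype A] (p : A → ℝ) : Prop :=
  (∀ a, 0 ≤ p a) ∧ ∑ a, p a = 1

/-- A stochastic kernel. -/
def IsKernel {A B : Type*} [Fintype B] (D : A → B → ℝ) : Prop :=
  (∀ a b, 0 ≤ D a b) ∧ ∀ a, ∑ b, D a b = 1

/-- A 2-user broadcast channel kernel `N(y1,y2|x)`. -/
def IsBCKernel {X Y1 Y2 : Type*} [Fintype Y1] [Fintype Y2] (N : X → Y1 → Y2 → ℝ) : Prop :=
  (∀ x y1 y2, 0 ≤ N x y1 y2) ∧ ∀ x, ∑ y1, ∑ y2, N x y1 y2 = 1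

/-- Tripartite non-signaling box: party `i` has input `a_i` and output `b_i`; for every
subset `T` of the parties, the marginal over the outputs of the parties not in `T`
depends only on the inputs of the parties in `T`. -/
def IsNSBox3 {A0 A1 A2 B0 B1 B2 : Type*} [Fintype B0] [Fintype B1] [Fintype B2]
    (Z : A0 → A1 → A2 → B0 → B1 → B2 → ℝ) : Prop :=
  (∀ a0 a1 a2 b0 b1 b2, 0 ≤ Z a0 a1 a2 b0 b1 b2) ∧
  (∀ a0 a1 a2, ∑ b0, ∑ b1, ∑ b2, Z a0 a1 a2 b0 b1 b2 = 1) ∧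
  (∀ a0 a0' a1 a2 b1 b2, ∑ b0, Z a0 a1 a2 b0 b1 b2 = ∑ b0, Z a0' a1 a2 b0 b1 b2) ∧
  (∀ a0 a1 a1' a2 b0 b2, ∑ b1, Z a0 a1 a2 b0 b1 b2 = ∑ b1, Z a0 a1' a2 b0 b1 b2) ∧
  (∀ a0 a1 a2 a2' b0 b1, ∑ b2, Z a0 a1 a2 b0 b1 b2 = ∑ b2, Z a0 a1 a2' b0 b1 b2) ∧
  (∀ a0 a0' a1 a1' a2 b2,
    ∑ b0, ∑ b1, Z a0 a1 a2 b0 b1 b2 = ∑ b0, ∑ b1, Z a0' a1' a2 b0 b1 b2) ∧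
  (∀ a0 a0' a1 a2 a2' b1,
    ∑ b0, ∑ b2, Z a0 a1 a2 b0 b1 b2 = ∑ b0, ∑ b2, Z a0' a1 a2' b0 b1 b2) ∧
  (∀ a0 a1 a1' a2 a2' b0,
    ∑ b1, ∑ b2, Z a0 a1 a2 b0 b1 b2 = ∑ b1, ∑ b2, Z a0 a1' a2' b0 b1 b2)

/-- The `n`-fold memoryless extension of the broadcast channel `N`. -/
def NProdBC {X Y1 Y2 : Type*} (n : ℕ) (N : X → Y1 → Y2 → ℝ) :
    (Fin n → X) → (Fin n → Y1) → (Fin n → Y2) → ℝ :=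
  fun x y1 y2 => ∏ i, N (x i) (y1 i) (y2 i)

/-- Joint success probability of a fully NS-assisted scheme
`Z(x, ŵ1, ŵ2 | (w1,w2), y1, y2)` over the broadcast channel `N`. -/
def etaBC {X Y1 Y2 : Type*} [Fintype X] [Fintype Y1] [Fintype Y2] (M1 M2 : ℕ)
    (N : X → Y1 → Y2 → ℝ)
    (Z : (Fin M1 × Fin M2) → Y1 → Y2 → X → Fin M1 → Fin M2 → ℝ) : ℝ :=
  ((M1 : ℝ) * (M2 : ℝ))⁻¹ * ∑ w1, ∑ w2, ∑ x, ∑ y1, ∑ y2,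
    N x y1 y2 * Z (w1, w2) y1 y2 x w1 w2

/-- NS-achievability of a rate pair over the broadcast channel `N` with full
(tripartite) NS assistance. -/
def NSAchBC {X Y1 Y2 : Type*} [Fintype X] [Fintype Y1] [Fintype Y2]
    (N : X → Y1 → Y2 → ℝ) (R : ℝ × ℝ) : Prop :=
  0 ≤ R.1 ∧ 0 ≤ R.2 ∧
  ∃ (M1 M2 : ℕ → ℕ)
    (Zn : ∀ n : ℕ, (Fin (M1 n) × Fin (M2 n)) → (Fin n → Y1) → (Fin n → Y2) →
      (Fin n → X) → Fin (M1 n) → Fin (M2 n) → ℝ),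
    (∀ n, IsNSBox3 (Zn n)) ∧
    Tendsto (fun n => etaBC (M1 n) (M2 n) (NProdBC n N) (Zn n)) atTop (nhds 1) ∧
    R.1 ≤ liminf (fun n => Real.logb 2 (M1 n) / (n : ℝ)) atTop ∧
    R.2 ≤ liminf (fun n => Real.logb 2 (M2 n) / (n : ℝ)) atTop

/-- The fully NS-assisted capacity region of the broadcast channel `N`. -/
def CNSBC {X Y1 Y2 : Type*} [Fintype X] [Fintype Y1] [Fintype Y2]
    (N : X → Y1 → Y2 → ℝ) : Set (ℝ × ℝ) :=
  closure {R : ℝ × ℝ | NSAchBC N R}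

/-- Mutual information `I(A;B)` (base 2) of a joint pmf `p(a,b)`. -/
def MI {A B : Type*} [Fintype A] [Fintype B] (p : A → B → ℝ) : ℝ :=
  ∑ a, ∑ b,
    if p a b = 0 then 0 else
      p a b * Real.logb 2 (p a b / ((∑ b', p a b') * (∑ a', p a' b)))

/-- Conditional mutual information `I(A;B|S)` (base 2) of a joint pmf `p(s,a,b)`. -/
def condMI {S A B : Type*} [Fintype S] [Fintype A] [Fintype B] (p : S → A → B → ℝ) : ℝ :=
  ∑ s, ∑ a, ∑ b,
    if p s a b = 0 then 0 else
      p s a b * Real.logb 2 (((∑ a', ∑ b', p s a' b') * p s a b) /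
        ((∑ b', p s a b') * (∑ a', p s a' b)))

/-- Shannon entropy (base 2) of a pmf `p`. -/
def H2 {A : Type*} [Fintype A] (p : A → ℝ) : ℝ :=
  -∑ a, if p a = 0 then 0 else p a * Real.logb 2 (p a)

/-- The Kramer–Shamai region `R_KS(N)`. -/
def RKS {X Y1 Y2 : Type*} [Fintype X] [Fintype Y1] [Fintype Y2]
    (N : X → Y1 → Y2 → ℝ) : Set (ℝ × ℝ) :=
  closure {R : ℝ × ℝ | 0 ≤ R.1 ∧ 0 ≤ R.2 ∧
    ∃ (m : ℕ) (q : X → Fin m → ℝ), IsPMF (fun p : X × Fin m => q p.1 p.2) ∧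
      R.1 ≤ MI (fun x y1 => (∑ u, q x u) * ∑ y2, N x y1 y2) ∧
      R.2 ≤ MI (fun (u : Fin m) y2 => ∑ x, ∑ y1, q x u * N x y1 y2) ∧
      R.1 + R.2 ≤ condMI (fun (u : Fin m) x y1 => ∑ y2, q x u * N x y1 y2)
        + MI (fun (u : Fin m) y2 => ∑ x, ∑ y1, q x u * N x y1 y2)}

/-- Sato's region `R_Sato(N)`. -/
def RSato {X Y1 Y2 : Type*} [Fintype X] [Fintype Y1] [Fintype Y2]
    (N : X → Y1 → Y2 → ℝ) : Set (ℝ × ℝ) :=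
  {R : ℝ × ℝ | 0 ≤ R.1 ∧ 0 ≤ R.2 ∧ ∃ p : X → ℝ, IsPMF p ∧
    R.1 ≤ MI (fun x y1 => p x * ∑ y2, N x y1 y2) ∧
    R.2 ≤ MI (fun x y2 => p x * ∑ y1, N x y1 y2) ∧
    ∀ N' : X → Y1 → Y2 → ℝ, IsBCKernel N' →
      (∀ x y1, ∑ y2, N' x y1 y2 = ∑ y2, N x y1 y2) →
      (∀ x y2, ∑ y1, N' x y1 y2 = ∑ y1, N x y1 y2) →
      R.1 + R.2 ≤ MI (fun x (y : Y1 × Y2) => p x * N' x y.1 y.2)}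

/-- Binary entropy function (base 2), with the `0·log₂ 0 = 0` convention. -/
def Hb (t : ℝ) : ℝ :=
  -(t * Real.logb 2 t) - (1 - t) * Real.logb 2 (1 - t)

/-- Individual success probability of user 1 for a fully NS-assisted scheme. -/
def eta1BC {X Y1 Y2 : Type*} [Fintype X] [Fintype Y1] [Fintype Y2] (M1 M2 : ℕ)
    (N : X → Y1 → Y2 → ℝ)
    (Z : (Fin M1 × Fin M2) → Y1 → Y2 → X → Fin M1 → Fin M2 → ℝ) : ℝ :=
  ((M1 : ℝ) * (M2 : ℝ))⁻¹ * ∑ w1, ∑ w2, ∑ wh2, ∑ x, ∑ y1, ∑ y2,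
    N x y1 y2 * Z (w1, w2) y1 y2 x w1 wh2

/-!
Receiver 1's success defines a test `λ(w2, x, y1) ∈ [0, 1]`, the conditional probability of
decoding `W1` correctly given `(W2, X, Y1)`. Under the joint law `p` of `(W2, X, Y1)` it accepts
with probability `η₁`. Under `q = p(w2) p(x|w2) p(y1|w2)` it accepts with probability `1/M1`:
there `Y1` carries no information about `X`, and by non-signaling receiver 1's output law does not
depend on the transmitter's input, so the correct-guess probabilities over `w1` sum to one.
Since `I(X;Y1|W2) = D(p‖q)`, data processing through the test gives
`I(X;Y1|W2) ≥ d(η₁ ‖ 1/M1) ≥ η₁ log M1 - h(η₁)`.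
-/

open Real

theorem mul_log_div_eq_mul_mul_log (a b : ℝ) : a * log (a / b) = b * (a / b * log (a / b)) := by
  rcases eq_or_ne b 0 with rfl | hb
  · simp
  · rw [← mul_assoc, mul_div_cancel₀ a hb]

theorem mul_mul_log_mul_div_mul (c a b : ℝ) :
    c * a * log (c * a / (c * b)) = c * (a * log (a / b)) := by
  rcases eq_or_ne c 0 with rfl | hc
  · simp
  · rw [mul_div_mul_left a b hc, mul_assoc]

theorem sum_mul_log_div_le {ι : Type*} [Fintype ι] {a b : ι → ℝ} (ha : ∀ i, 0 ≤ a i)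
    (hb : ∀ i, 0 ≤ b i) (hab : ∀ i, b i = 0 → a i = 0) :
    (∑ i, a i) * log ((∑ i, a i) / ∑ i, b i) ≤ ∑ i, a i * log (a i / b i) := by
  rcases (sum_nonneg fun i _ => hb i).eq_or_lt with hB | hB
  · have ha0 : ∀ i, a i = 0 := fun i =>
      hab i ((sum_eq_zero_iff_of_nonneg fun i _ => hb i).1 hB.symm i (mem_univ i))
    simp [ha0]
  have hJensen := convexOn_mul_log.map_centerMass_le (t := univ) (p := fun i => a i / b i)
    (fun i _ => hb i) hB fun i _ => Set.mem_Ici.2 (div_nonneg (ha i) (hb i))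
  have hmean : ∑ i, b i * (a i / b i) = ∑ i, a i := sum_congr rfl fun i _ => by
    rcases eq_or_ne (b i) 0 with h | h
    · simp [h, hab i h]
    · exact mul_div_cancel₀ (a i) h
  simp only [centerMass, smul_eq_mul, Function.comp_apply] at hJensen
  rw [← hmean]
  simp only [mul_log_div_eq_mul_mul_log (a _)]
  set B := ∑ i, b i
  set A := ∑ i, b i * (a i / b i)
  calc A * log (A / B) = B * ((B⁻¹ * A) * log (B⁻¹ * A)) := by
        rw [inv_mul_eq_div, ← mul_assoc, mul_div_cancel₀ A hB.ne']
    _ ≤ B * (B⁻¹ * ∑ i, b i * (a i / b i * log (a i / b i))) :=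
        mul_le_mul_of_nonneg_left hJensen hB.le
    _ = _ := by rw [← mul_assoc, mul_inv_cancel₀ hB.ne', one_mul]

/-- Data processing for relative entropy under the two-outcome channel `i ↦ Bernoulli (lam i)`. -/
theorem binary_mul_log_div_le_sum_mul_log_div {ι : Type*} [Fintype ι] {p q lam : ι → ℝ}
    (hp : ∀ i, 0 ≤ p i) (hq : ∀ i, 0 ≤ q i) (hpq : ∀ i, q i = 0 → p i = 0)
    (hp1 : ∑ i, p i = 1) (hq1 : ∑ i, q i = 1) (hlam0 : ∀ i, 0 ≤ lam i) (hlam1 : ∀ i, lam i ≤ 1)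
    {α β : ℝ} (hα : ∑ i, lam i * p i = α) (hβ : ∑ i, lam i * q i = β) :
    α * log (α / β) + (1 - α) * log ((1 - α) / (1 - β)) ≤ ∑ i, p i * log (p i / q i) := by
  have hlam1' : ∀ i, 0 ≤ 1 - lam i := fun i => sub_nonneg.2 (hlam1 i)
  have hcompl : ∀ r : ι → ℝ, ∑ i, (1 - lam i) * r i = ∑ i, r i - ∑ i, lam i * r i := fun r => by
    rw [← sum_sub_distrib]; exact sum_congr rfl fun i _ => by ring
  have accept := sum_mul_log_div_le (a := fun i => lam i * p i) (b := fun i => lam i * q i)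
    (fun i => mul_nonneg (hlam0 i) (hp i)) (fun i => mul_nonneg (hlam0 i) (hq i))
    fun i h => by simp only [mul_eq_zero] at h ⊢; exact h.imp_right (hpq i)
  have reject := sum_mul_log_div_le (a := fun i => (1 - lam i) * p i)
    (b := fun i => (1 - lam i) * q i)
    (fun i => mul_nonneg (hlam1' i) (hp i)) (fun i => mul_nonneg (hlam1' i) (hq i))
    fun i h => by simp only [mul_eq_zero] at h ⊢; exact h.imp_right (hpq i)
  simp only [mul_mul_log_mul_div_mul, hcompl, hp1, hq1, hα, hβ] at accept reject
  linarith

theorem mul_log_add_binary_le {α β M : ℝ} (hα0 : 0 ≤ α) (hα1 : α ≤ 1) (hβ0 : 0 ≤ β)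
    (hβα : β = 0 → α = 0) (hM : 1 ≤ M) (hβM : β ≤ M⁻¹) :
    α * log M + α * log α + (1 - α) * log (1 - α)
      ≤ α * log (α / β) + (1 - α) * log ((1 - α) / (1 - β)) := by
  have hβ1 : β ≤ 1 := hβM.trans (inv_le_one_of_one_le₀ hM)
  gcongr ?_ + ?_
  · rcases hα0.eq_or_lt with rfl | hα
    · simp
    have hβ : 0 < β := hβ0.lt_of_ne fun h => hα.ne' (hβα h.symm)
    rw [← mul_add, ← log_mul (by positivity) hα.ne']
    gcongr
    rw [le_div_iff₀ hβ, mul_comm M, mul_assoc]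
    exact mul_le_of_le_one_right hα.le ((le_inv_mul_iff₀ (by positivity)).1 (by rwa [mul_one]))
  · rcases hα1.eq_or_lt with rfl | hα
    · simp
    rcases hβ1.eq_or_lt with rfl | hβ
    · simpa using mul_log_nonpos (sub_nonneg.2 hα1) (sub_le_self 1 hα0)
    gcongr
    exact le_div_self (by linarith) (by linarith) (by linarith)

/-- Fano's inequality in hypothesis-testing form. -/
theorem mul_log_add_binary_le_sum_mul_log_div {ι : Type*} [Fintype ι] {p q lam : ι → ℝ}
    (hp : ∀ i, 0 ≤ p i) (hq : ∀ i, 0 ≤ q i) (hpq : ∀ i, q i = 0 → p i = 0)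
    (hp1 : ∑ i, p i = 1) (hq1 : ∑ i, q i = 1) (hlam0 : ∀ i, 0 ≤ lam i) (hlam1 : ∀ i, lam i ≤ 1)
    {M : ℝ} (hM : 1 ≤ M) (hβM : ∑ i, lam i * q i ≤ M⁻¹) :
    (∑ i, lam i * p i) * log M + (∑ i, lam i * p i) * log (∑ i, lam i * p i)
      + (1 - ∑ i, lam i * p i) * log (1 - ∑ i, lam i * p i)
      ≤ ∑ i, p i * log (p i / q i) := by
  refine (mul_log_add_binary_le (sum_nonneg fun i _ => mul_nonneg (hlam0 i) (hp i)) ?_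
    (sum_nonneg fun i _ => mul_nonneg (hlam0 i) (hq i)) ?_ hM hβM).trans
    (binary_mul_log_div_le_sum_mul_log_div hp hq hpq hp1 hq1 hlam0 hlam1 rfl rfl)
  · exact hp1 ▸ sum_le_sum fun i _ => mul_le_of_le_one_left (hp i) (hlam1 i)
  · intro hβ
    have hzero := (sum_eq_zero_iff_of_nonneg fun i _ => mul_nonneg (hlam0 i) (hq i)).1 hβ
    refine sum_eq_zero fun i hi => ?_
    rcases mul_eq_zero.1 (hzero i hi) with h | h
    · rw [h, zero_mul]
    · rw [hpq i h, mul_zero]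

section CondProduct

variable {S A B : Type*} [Fintype A] [Fintype B]

/-- The law `p(s) p(a|s) p(b|s)`: same `(S,A)` and `(S,B)` marginals as `p`, but `A` and `B`
conditionally independent given `S`. -/
def condProduct (p : S → A → B → ℝ) (s : S) (a : A) (b : B) : ℝ :=
  (∑ b', p s a b') * (∑ a', p s a' b) / ∑ a', ∑ b', p s a' b'

theorem condMI_eq_sum_mul_log_div_condProduct [Fintype S] (p : S → A → B → ℝ) :
    condMI p = (∑ s, ∑ a, ∑ b, p s a b * log (p s a b / condProduct p s a b)) / log 2 := by
  simp only [condMI, condProduct, sum_div]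
  refine sum_congr rfl fun s _ => sum_congr rfl fun a _ => sum_congr rfl fun b _ => ?_
  split_ifs with h
  · simp [h]
  · rw [logb, div_div_eq_mul_div, mul_comm (p s a b) (∑ a', ∑ b', p s a' b')]
    ring

theorem condProduct_nonneg {p : S → A → B → ℝ} (hp : ∀ s a b, 0 ≤ p s a b) (s : S) (a : A)
    (b : B) : 0 ≤ condProduct p s a b :=
  div_nonneg
    (mul_nonneg (sum_nonneg fun b' _ => hp s a b') (sum_nonneg fun a' _ => hp s a' b))
    (sum_nonneg fun a' _ => sum_nonneg fun b' _ => hp s a' b')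

theorem sum_condProduct (p : S → A → B → ℝ) (s : S) :
    ∑ a, ∑ b, condProduct p s a b = ∑ a, ∑ b, p s a b := by
  simp only [condProduct, ← sum_div, ← sum_mul, ← mul_sum]
  rw [sum_comm (f := fun b a => p s a b), mul_self_div_self]

theorem eq_zero_of_condProduct_eq_zero {p : S → A → B → ℝ} (hp : ∀ s a b, 0 ≤ p s a b)
    {s : S} {a : A} {b : B} (h : condProduct p s a b = 0) : p s a b = 0 := by
  have hrow : p s a b ≤ ∑ b', p s a b' := single_le_sum (fun b' _ => hp s a b') (mem_univ b)
  have hcol : p s a b ≤ ∑ a', p s a' b := single_le_sum (fun a' _ => hp s a' b) (mem_univ a)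
  have htot : ∑ b', p s a b' ≤ ∑ a', ∑ b', p s a' b' :=
    single_le_sum (f := fun a' => ∑ b', p s a' b')
      (fun a' _ => sum_nonneg fun b' _ => hp s a' b') (mem_univ a)
  simp only [condProduct, div_eq_zero_iff, mul_eq_zero] at h
  refine le_antisymm ?_ (hp s a b)
  rcases h with (h | h) | h
  · exact h ▸ hrow
  · exact h ▸ hcol
  · exact h ▸ hrow.trans htot

theorem mul_logb_sub_Hb_eq (t M : ℝ) :
    t * logb 2 M - Hb t = (t * log M + t * log t + (1 - t) * log (1 - t)) / log 2 := by
  simp only [Hb, logb]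
  ring

theorem mul_logb_sub_Hb_le_condMI [Fintype S] {p lam : S → A → B → ℝ}
    (hp : ∀ s a b, 0 ≤ p s a b) (hp1 : ∑ s, ∑ a, ∑ b, p s a b = 1)
    (hlam0 : ∀ s a b, 0 ≤ lam s a b) (hlam1 : ∀ s a b, lam s a b ≤ 1) {M : ℝ} (hM : 1 ≤ M)
    (hβM : ∑ s, ∑ a, ∑ b, lam s a b * condProduct p s a b ≤ M⁻¹) :
    (∑ s, ∑ a, ∑ b, lam s a b * p s a b) * logb 2 M - Hb (∑ s, ∑ a, ∑ b, lam s a b * p s a b)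
      ≤ condMI p := by
  have hfano := mul_log_add_binary_le_sum_mul_log_div (ι := S × A × B)
    (p := fun i => p i.1 i.2.1 i.2.2) (q := fun i => condProduct p i.1 i.2.1 i.2.2)
    (lam := fun i => lam i.1 i.2.1 i.2.2) (fun i => hp _ _ _)
    (fun i => condProduct_nonneg hp _ _ _) (fun i => eq_zero_of_condProduct_eq_zero hp)
    (by simpa only [Fintype.sum_prod_type] using hp1)
    (by simpa only [Fintype.sum_prod_type, sum_condProduct] using hp1)
    (fun i => hlam0 _ _ _) (fun i => hlam1 _ _ _) hM
    (by simpa only [Fintype.sum_prod_type] using hβM)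
  simp only [Fintype.sum_prod_type] at hfano
  rw [mul_logb_sub_Hb_eq, condMI_eq_sum_mul_log_div_condProduct]
  exact div_le_div_of_nonneg_right hfano (log_nonneg one_le_two)

end CondProduct

namespace IsNSBox3

variable {A0 A1 A2 B0 B1 B2 : Type*} [Fintype B0] [Fintype B1] [Fintype B2]
  {Z : A0 → A1 → A2 → B0 → B1 → B2 → ℝ}

theorem nonneg (hZ : IsNSBox3 Z) (a0 : A0) (a1 : A1) (a2 : A2) (b0 : B0) (b1 : B1) (b2 : B2) :
    0 ≤ Z a0 a1 a2 b0 b1 b2 :=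
  hZ.1 a0 a1 a2 b0 b1 b2

theorem sum_eq_one (hZ : IsNSBox3 Z) (a0 : A0) (a1 : A1) (a2 : A2) :
    ∑ b0, ∑ b1, ∑ b2, Z a0 a1 a2 b0 b1 b2 = 1 :=
  hZ.2.1 a0 a1 a2

theorem marginal01_eq (hZ : IsNSBox3 Z) (a0 : A0) (a1 : A1) (a2 a2' : A2) (b0 : B0) (b1 : B1) :
    ∑ b2, Z a0 a1 a2 b0 b1 b2 = ∑ b2, Z a0 a1 a2' b0 b1 b2 :=
  hZ.2.2.2.2.1 a0 a1 a2 a2' b0 b1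

theorem marginal1_eq (hZ : IsNSBox3 Z) (a0 a0' : A0) (a1 : A1) (a2 a2' : A2) (b1 : B1) :
    ∑ b0, ∑ b2, Z a0 a1 a2 b0 b1 b2 = ∑ b0, ∑ b2, Z a0' a1 a2' b0 b1 b2 :=
  hZ.2.2.2.2.2.2.1 a0 a0' a1 a2 a2' b1

/-- Party 1 learns nothing about party 0's input: if that input carries a candidate value `b1` for
party 1's output, the probabilities of a correct guess sum to one over all candidates. -/
theorem sum_guess_eq_one {C : Type*} [Nonempty B1] {Z : B1 × C → A1 → A2 → B0 → B1 → B2 → ℝ}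
    (hZ : IsNSBox3 Z) (c : C) (a1 : A1) (a2 : A2) :
    ∑ b1, ∑ b0, ∑ b2, Z (b1, c) a1 a2 b0 b1 b2 = 1 := by
  rw [sum_congr rfl fun b1 _ => hZ.marginal1_eq (b1, c) (Classical.arbitrary B1, c) a1 a2 a2 b1,
    sum_comm, hZ.sum_eq_one]

end IsNSBox3

section BroadcastCode

variable {X Y1 Y2 : Type*} {M1 M2 : ℕ}

/-- The joint law `p(w2, x, y1)`. -/
def bcJoint [Fintype Y2] (N : X → Y1 → Y2 → ℝ) (ZT : Fin M1 → Fin M2 → X → ℝ) (w2 : Fin M2)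
    (x : X) (y1 : Y1) : ℝ :=
  ((M1 : ℝ) * (M2 : ℝ))⁻¹ * ∑ w1, ∑ y2, ZT w1 w2 x * N x y1 y2

def correctMass (Z : (Fin M1 × Fin M2) → Y1 → Y2 → X → Fin M1 → Fin M2 → ℝ) (y2 : Y2)
    (w2 : Fin M2) (x : X) (y1 : Y1) : ℝ :=
  ∑ w1, ∑ wh2, Z (w1, w2) y1 y2 x w1 wh2

/-- The test `λ(w2, x, y1)`: the conditional probability that receiver 1 decodes correctly given
`W2 = w2, X = x, Y1 = y1` (by non-signaling it does not depend on `y2`). -/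
def decodingTest (Z : (Fin M1 × Fin M2) → Y1 → Y2 → X → Fin M1 → Fin M2 → ℝ)
    (ZT : Fin M1 → Fin M2 → X → ℝ) (y2 : Y2) (w2 : Fin M2) (x : X) (y1 : Y1) : ℝ :=
  correctMass Z y2 w2 x y1 / ∑ w1, ZT w1 w2 x

variable {N : X → Y1 → Y2 → ℝ} {Z : (Fin M1 × Fin M2) → Y1 → Y2 → X → Fin M1 → Fin M2 → ℝ}
  {ZT : Fin M1 → Fin M2 → X → ℝ}

theorem bcJoint_eq [Fintype Y2] (w2 : Fin M2) (x : X) (y1 : Y1) :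
    bcJoint N ZT w2 x y1 = ((M1 : ℝ) * (M2 : ℝ))⁻¹ * (∑ w1, ZT w1 w2 x) * ∑ y2, N x y1 y2 := by
  rw [bcJoint, mul_assoc, sum_mul_sum]

theorem sum_bcJoint_right [Fintype Y1] [Fintype Y2] (hN : IsBCKernel N) (w2 : Fin M2) (x : X) :
    ∑ y1, bcJoint N ZT w2 x y1 = ((M1 : ℝ) * (M2 : ℝ))⁻¹ * ∑ w1, ZT w1 w2 x := by
  simp only [bcJoint_eq, ← mul_sum, hN.2, mul_one]

theorem condProduct_bcJoint [Fintype X] [Fintype Y1] [Fintype Y2] (hN : IsBCKernel N)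
    {w2 : Fin M2} (hsum : ∑ x, ∑ y1, bcJoint N ZT w2 x y1 = (M2 : ℝ)⁻¹) (x : X) (y1 : Y1) :
    condProduct (bcJoint N ZT) w2 x y1
      = M2 * (((M1 : ℝ) * (M2 : ℝ))⁻¹ * ∑ w1, ZT w1 w2 x) * ∑ x', bcJoint N ZT w2 x' y1 := by
  rw [condProduct, hsum, sum_bcJoint_right hN, div_inv_eq_mul]
  ring

variable [Fintype X] (hZ : IsNSBox3 Z)
  (hZT : ∀ w1 w2 y1 y2 x, ZT w1 w2 x = ∑ wh1, ∑ wh2, Z (w1, w2) y1 y2 x wh1 wh2)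
include hZ

theorem correctMass_nonneg (y2 : Y2) (w2 : Fin M2) (x : X) (y1 : Y1) :
    0 ≤ correctMass Z y2 w2 x y1 :=
  sum_nonneg fun _ _ => sum_nonneg fun _ _ => hZ.nonneg ..

theorem correctMass_eq (y2 y2' : Y2) (w2 : Fin M2) (x : X) (y1 : Y1) :
    correctMass Z y2 w2 x y1 = correctMass Z y2' w2 x y1 :=
  sum_congr rfl fun w1 _ => hZ.marginal01_eq (w1, w2) y1 y2 y2' x w1

include hZT

theorem ZT_nonneg [Nonempty Y1] [Nonempty Y2] (w1 : Fin M1) (w2 : Fin M2) (x : X) :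
    0 ≤ ZT w1 w2 x := by
  rw [hZT w1 w2 (Classical.arbitrary Y1) (Classical.arbitrary Y2)]
  exact sum_nonneg fun _ _ => sum_nonneg fun _ _ => hZ.nonneg ..

theorem sum_ZT [Nonempty Y1] [Nonempty Y2] (w1 : Fin M1) (w2 : Fin M2) : ∑ x, ZT w1 w2 x = 1 := by
  simp only [hZT w1 w2 (Classical.arbitrary Y1) (Classical.arbitrary Y2)]
  exact hZ.sum_eq_one ..

theorem correctMass_le (y2 : Y2) (w2 : Fin M2) (x : X) (y1 : Y1) :
    correctMass Z y2 w2 x y1 ≤ ∑ w1, ZT w1 w2 x := by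
  refine sum_le_sum fun w1 _ => ?_
  rw [hZT w1 w2 y1 y2 x]
  exact single_le_sum (f := fun wh1 => ∑ wh2, Z (w1, w2) y1 y2 x wh1 wh2)
    (fun _ _ => sum_nonneg fun _ _ => hZ.nonneg ..) (mem_univ w1)

theorem decodingTest_mul_sum_ZT (y2 : Y2) (w2 : Fin M2) (x : X) (y1 : Y1) :
    decodingTest Z ZT y2 w2 x y1 * ∑ w1, ZT w1 w2 x = correctMass Z y2 w2 x y1 := by
  rcases eq_or_ne (∑ w1, ZT w1 w2 x) 0 with h | h
  · rw [h, mul_zero]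
    exact (le_antisymm (h ▸ correctMass_le hZ hZT y2 w2 x y1) (correctMass_nonneg hZ ..)).symm
  · exact div_mul_cancel₀ _ h

theorem decodingTest_nonneg [Nonempty Y1] [Nonempty Y2] (y2 : Y2) (w2 : Fin M2) (x : X)
    (y1 : Y1) : 0 ≤ decodingTest Z ZT y2 w2 x y1 :=
  div_nonneg (correctMass_nonneg hZ ..) (sum_nonneg fun _ _ => ZT_nonneg hZ hZT ..)

theorem decodingTest_le_one (y2 : Y2) (w2 : Fin M2) (x : X) (y1 : Y1) :
    decodingTest Z ZT y2 w2 x y1 ≤ 1 :=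
  div_le_one_of_le₀ (correctMass_le hZ hZT y2 w2 x y1)
    ((correctMass_nonneg hZ ..).trans (correctMass_le hZ hZT y2 w2 x y1))

theorem sum_decodingTest_mul_bcJoint [Fintype Y1] [Fintype Y2] (y2 : Y2) :
    ∑ w2, ∑ x, ∑ y1, decodingTest Z ZT y2 w2 x y1 * bcJoint N ZT w2 x y1 = eta1BC M1 M2 N Z := by
  have hterm : ∀ w2 x y1, decodingTest Z ZT y2 w2 x y1 * bcJoint N ZT w2 x y1
      = ((M1 : ℝ) * (M2 : ℝ))⁻¹ * ∑ y2', N x y1 y2' * correctMass Z y2' w2 x y1 := by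
    intro w2 x y1
    set c := ((M1 : ℝ) * (M2 : ℝ))⁻¹
    calc _ = c * (decodingTest Z ZT y2 w2 x y1 * ∑ w1, ZT w1 w2 x) * ∑ y2', N x y1 y2' := by
          rw [bcJoint_eq]; ring
      _ = _ := by
          rw [decodingTest_mul_sum_ZT hZ hZT, mul_assoc, mul_sum]
          exact congrArg _ (sum_congr rfl fun y2' _ => by rw [correctMass_eq hZ y2 y2', mul_comm])
  simp only [hterm, eta1BC, correctMass, mul_sum]
  -- pushing the `X`, `Y1`, `Y2` sums innermost brings both sides to the same order
  simp only [sum_comm (γ := X)]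
  simp only [sum_comm (γ := Y1)]
  simp only [sum_comm (γ := Y2)]
  exact sum_comm

theorem bcJoint_nonneg [Fintype Y1] [Fintype Y2] [Nonempty Y1] [Nonempty Y2] (hN : IsBCKernel N)
    (w2 : Fin M2) (x : X) (y1 : Y1) : 0 ≤ bcJoint N ZT w2 x y1 := by
  rw [bcJoint_eq]
  exact mul_nonneg (mul_nonneg (by positivity) (sum_nonneg fun w1 _ => ZT_nonneg hZ hZT w1 w2 x))
    (sum_nonneg fun y2 _ => hN.1 x y1 y2)

theorem sum_sum_bcJoint [Fintype Y1] [Fintype Y2] [Nonempty Y1] [Nonempty Y2] [NeZero M1]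
    (hN : IsBCKernel N) (w2 : Fin M2) : ∑ x, ∑ y1, bcJoint N ZT w2 x y1 = (M2 : ℝ)⁻¹ := by
  simp only [sum_bcJoint_right hN, ← mul_sum]
  rw [sum_comm]
  simp only [sum_ZT hZ hZT, sum_const, card_univ, Fintype.card_fin, nsmul_eq_mul, mul_one]
  field_simp [NeZero.ne (M1 : ℝ)]

theorem sum_bcJoint [Fintype Y1] [Fintype Y2] [Nonempty Y1] [Nonempty Y2] [NeZero M1]
    [NeZero M2] (hN : IsBCKernel N) : ∑ w2, ∑ x, ∑ y1, bcJoint N ZT w2 x y1 = 1 := by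
  simp only [sum_sum_bcJoint hZ hZT hN, sum_const, card_univ, Fintype.card_fin, nsmul_eq_mul]
  exact mul_inv_cancel₀ (NeZero.ne _)

omit hZT in
theorem sum_correctMass [NeZero M1] (y2 : Y2) (w2 : Fin M2) (y1 : Y1) :
    ∑ x, correctMass Z y2 w2 x y1 = 1 := by
  simp only [correctMass]
  rw [sum_comm]
  exact hZ.sum_guess_eq_one w2 y1 y2

theorem sum_decodingTest_mul_condProduct [Fintype Y1] [Fintype Y2] [Nonempty Y1] [Nonempty Y2]
    [NeZero M1] [NeZero M2] (hN : IsBCKernel N) (y2 : Y2) :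
    ∑ w2, ∑ x, ∑ y1, decodingTest Z ZT y2 w2 x y1 * condProduct (bcJoint N ZT) w2 x y1
      = (M1 : ℝ)⁻¹ := by
  have hterm : ∀ w2 x y1, decodingTest Z ZT y2 w2 x y1 * condProduct (bcJoint N ZT) w2 x y1
      = M2 * ((M1 : ℝ) * (M2 : ℝ))⁻¹ * (∑ x', bcJoint N ZT w2 x' y1)
        * correctMass Z y2 w2 x y1 := by
    intro w2 x y1
    rw [condProduct_bcJoint hN (sum_sum_bcJoint hZ hZT hN w2), ← decodingTest_mul_sum_ZT hZ hZT]
    ring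
  simp only [hterm]
  rw [sum_congr rfl fun w2 _ => sum_comm]
  simp only [← mul_sum, sum_correctMass hZ, mul_one]
  rw [sum_congr rfl fun w2 _ => sum_comm, sum_bcJoint hZ hZT hN, mul_one, mul_inv,
    mul_left_comm, mul_inv_cancel₀ (NeZero.ne (M2 : ℝ)), mul_one]

end BroadcastCode

/-- NS Fano inequality for broadcast channels: for any fully
NS-assisted scheme `Z`, the induced joint distribution
`p(w2,x,y1) = (1/(M1·M2)) Σ_{w1,y2} Z_T(x|w1,w2)·N(y1,y2|x)` satisfies
`I(X;Y1|W2) ≥ η₁(Z)·log₂ M1 − H_b(η₁(Z))`, where `Z_T` is the transmitter marginal. -/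
theorem stmt10 {X Y1 Y2 : Type*} [Fintype X] [Fintype Y1] [Fintype Y2]
    (N : X → Y1 → Y2 → ℝ) (hN : IsBCKernel N) (M1 M2 : ℕ)
    (Z : (Fin M1 × Fin M2) → Y1 → Y2 → X → Fin M1 → Fin M2 → ℝ) (hZ : IsNSBox3 Z)
    (ZT : Fin M1 → Fin M2 → X → ℝ)
    (hZT : ∀ w1 w2 y1 y2 x, ZT w1 w2 x = ∑ wh1, ∑ wh2, Z (w1, w2) y1 y2 x wh1 wh2) :
    eta1BC M1 M2 N Z * Real.logb 2 M1 - Hb (eta1BC M1 M2 N Z)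
      ≤ condMI (fun (w2 : Fin M2) x y1 =>
          ((M1 : ℝ) * (M2 : ℝ))⁻¹ * ∑ w1, ∑ y2, ZT w1 w2 x * N x y1 y2) := by
  rcases isEmpty_or_nonempty Y1 with _ | _
  · simp [eta1BC, condMI, Hb]
  rcases isEmpty_or_nonempty Y2 with _ | _
  · simp [eta1BC, condMI, Hb]
  obtain rfl | hM1 := eq_or_ne M1 0
  · simp [eta1BC, condMI, Hb]
  obtain rfl | hM2 := eq_or_ne M2 0
  · simp [eta1BC, condMI, Hb]
  have : NeZero M1 := ⟨hM1⟩
  have : NeZero M2 := ⟨hM2⟩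
  obtain ⟨y2⟩ := ‹Nonempty Y2›
  rw [← sum_decodingTest_mul_bcJoint hZ hZT y2]
  exact mul_logb_sub_Hb_le_condMI (bcJoint_nonneg hZ hZT hN) (sum_bcJoint hZ hZT hN)
    (decodingTest_nonneg hZ hZT y2) (decodingTest_le_one hZ hZT y2)
    (Nat.one_le_cast.2 (Nat.one_le_iff_ne_zero.2 hM1))
    (sum_decodingTest_mul_condProduct hZ hZT hN y2).le
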